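/- arXiv:2403.01227 — 2 statements merged into one kernel-verified Lean document; each statement's English description precedes it below -/
import Mathlib

section
/- Let B̄ be an invertible symmetric real 3×3 matrix, let (n, a, b) be an orthonormal triad of vectors in ℝ³ (n·n = a·a = b·b = 1, n·a = n·b = a·b = 0), let f′, g′, p, W₁, W₂ be real numbers, set B = (I + f′ a⊗n + g′ b⊗n) B̄ (I + f′ n⊗a + g′ n⊗b), and let T = −p I + 2W₁ B − 2W₂ B⁻¹. Then the shear stress component a·(T n) equals 2W₁( n·(B̄a) + f′ n·(B̄n) ) − 2W₂( n·(B̄⁻¹a) − f′ a·(B̄⁻¹a) − g′ a·(B̄⁻¹b) ). -/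
/-!
Put `c = f' a + g' b`. Then `B = F B̄ Fᵀ` for the simple shear `F = 1 + c ⊗ n`, and `n · c = 0`
makes `c ⊗ n` square to zero, so `F⁻¹ = 1 - c ⊗ n` and `B⁻¹ = (1 - n ⊗ c) B̄⁻¹ (1 - c ⊗ n)`.
Moving the outer factors onto `a` and `n` gives `a · B n = (a + f' n) · B̄ n` and
`a · B⁻¹ n = a · B̄⁻¹ (n - c)`; the symmetry of `B̄` (hence of `B̄⁻¹`) finishes the computation.
-/

open Matrix

namespace Matrix

variable {ι R : Type*} [Fintype ι] [CommRing R]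

theorem dotProduct_mul_mul_mulVec (x y : ι → R) (P A Q : Matrix ι ι R) :
    x ⬝ᵥ (P * A * Q) *ᵥ y = (x ᵥ* P) ⬝ᵥ A *ᵥ (Q *ᵥ y) := by
  rw [← mulVec_mulVec, ← mulVec_mulVec, dotProduct_mulVec]

theorem IsSymm.dotProduct_mulVec_comm {A : Matrix ι ι R} (hA : A.IsSymm) (x y : ι → R) :
    x ⬝ᵥ A *ᵥ y = y ⬝ᵥ A *ᵥ x := by
  rw [dotProduct_mulVec, ← mulVec_transpose, hA.eq, dotProduct_comm]

variable [DecidableEq ι]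

theorem one_add_vecMulVec_mul_one_sub_vecMulVec {u v : ι → R} (h : v ⬝ᵥ u = 0) :
    (1 + vecMulVec u v) * (1 - vecMulVec u v) = 1 := by
  rw [mul_sub, mul_one, add_mul, one_mul, vecMulVec_mul_vecMulVec, h, zero_smul, vecMulVec_zero]
  abel

theorem inv_one_add_vecMulVec {u v : ι → R} (h : v ⬝ᵥ u = 0) :
    (1 + vecMulVec u v)⁻¹ = 1 - vecMulVec u v :=
  inv_eq_right_inv (one_add_vecMulVec_mul_one_sub_vecMulVec h)

theorem one_add_vecMulVec_mulVec (u v w : ι → R) :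
    (1 + vecMulVec u v) *ᵥ w = w + (v ⬝ᵥ w) • u := by
  rw [add_mulVec, one_mulVec, vecMulVec_mulVec, op_smul_eq_smul]

theorem one_sub_vecMulVec_mulVec (u v w : ι → R) :
    (1 - vecMulVec u v) *ᵥ w = w - (v ⬝ᵥ w) • u := by
  rw [sub_mulVec, one_mulVec, vecMulVec_mulVec, op_smul_eq_smul]

theorem vecMul_one_add_vecMulVec (u v w : ι → R) :
    w ᵥ* (1 + vecMulVec u v) = w + (w ⬝ᵥ u) • v := by
  rw [vecMul_add, vecMul_one, vecMul_vecMulVec]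

theorem vecMul_one_sub_vecMulVec (u v w : ι → R) :
    w ᵥ* (1 - vecMulVec u v) = w - (w ⬝ᵥ u) • v := by
  rw [vecMul_sub, vecMul_one, vecMul_vecMulVec]

end Matrix

theorem shear_stress_a_component_general
    (Bbar : Matrix (Fin 3) (Fin 3) ℝ) (hB : Bbar.IsSymm)
    (n a b : Fin 3 → ℝ)
    (hnn : n ⬝ᵥ n = 1) (haa : a ⬝ᵥ a = 1)
    (hna : n ⬝ᵥ a = 0) (hnb : n ⬝ᵥ b = 0) (hab : a ⬝ᵥ b = 0)
    (f' g' p W₁ W₂ : ℝ)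
    (B : Matrix (Fin 3) (Fin 3) ℝ)
    (hBdef : B = (1 + f' • vecMulVec a n + g' • vecMulVec b n) * Bbar *
      (1 + f' • vecMulVec n a + g' • vecMulVec n b))
    (T : Matrix (Fin 3) (Fin 3) ℝ)
    (hT : T = (-p) • (1 : Matrix (Fin 3) (Fin 3) ℝ) + (2 * W₁) • B - (2 * W₂) • B⁻¹) :
    a ⬝ᵥ T.mulVec n =
      2 * W₁ * ((n ⬝ᵥ Bbar.mulVec a) + f' * (n ⬝ᵥ Bbar.mulVec n))
      - 2 * W₂ * ((n ⬝ᵥ Bbar⁻¹.mulVec a) - f' * (a ⬝ᵥ Bbar⁻¹.mulVec a)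
          - g' * (a ⬝ᵥ Bbar⁻¹.mulVec b)) := by
  set c := f' • a + g' • b
  have hnc : n ⬝ᵥ c = 0 := by simp [c, hna, hnb]
  have hcn : c ⬝ᵥ n = 0 := by rwa [dotProduct_comm]
  have hac : a ⬝ᵥ c = f' := by simp [c, haa, hab]
  have hB' : B = (1 + vecMulVec c n) * Bbar * (1 + vecMulVec n c) := by
    simp only [hBdef, c, add_vecMulVec, vecMulVec_add, smul_vecMulVec, vecMulVec_smul, add_assoc]
  have hBinv : B⁻¹ = (1 - vecMulVec n c) * Bbar⁻¹ * (1 - vecMulVec c n) := by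
    rw [hB', Matrix.mul_inv_rev, Matrix.mul_inv_rev, inv_one_add_vecMulVec hnc,
      inv_one_add_vecMulVec hcn, mul_assoc]
  have haBn : a ⬝ᵥ B *ᵥ n = n ⬝ᵥ Bbar *ᵥ a + f' * (n ⬝ᵥ Bbar *ᵥ n) := by
    rw [hB', dotProduct_mul_mul_mulVec, vecMul_one_add_vecMulVec, one_add_vecMulVec_mulVec, hcn,
      zero_smul, add_zero, hac, add_dotProduct, smul_dotProduct, hB.dotProduct_mulVec_comm a,
      smul_eq_mul]
  have haBinvn : a ⬝ᵥ B⁻¹ *ᵥ n =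
      n ⬝ᵥ Bbar⁻¹ *ᵥ a - f' * (a ⬝ᵥ Bbar⁻¹ *ᵥ a) - g' * (a ⬝ᵥ Bbar⁻¹ *ᵥ b) := by
    rw [hBinv, dotProduct_mul_mul_mulVec, vecMul_one_sub_vecMulVec, one_sub_vecMulVec_mulVec,
      dotProduct_comm a n, hna, hnn, zero_smul, sub_zero, one_smul]
    simp only [c, mulVec_sub, mulVec_add, mulVec_smul, dotProduct_sub, dotProduct_add,
      dotProduct_smul, smul_eq_mul, hB.inv.dotProduct_mulVec_comm a n]
    ring
  rw [hT]
  simp only [sub_mulVec, add_mulVec, smul_mulVec, one_mulVec, dotProduct_sub, dotProduct_add,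
    dotProduct_smul, smul_eq_mul, dotProduct_comm a n, hna, haBn, haBinvn]
  ring

/-- Shear stress component `T_{ξη} = a·(T n)` for the Cauchy stress
`T = −p I + 2W₁ B − 2W₂ B⁻¹` of the motion. -/
theorem shear_stress_a_component
    (Bbar : Matrix (Fin 3) (Fin 3) ℝ) (hB : Bbar.IsSymm)
    (hBinv : IsUnit Bbar.det)
    (n a b : Fin 3 → ℝ)
    (hnn : n ⬝ᵥ n = 1) (haa : a ⬝ᵥ a = 1) (hbb : b ⬝ᵥ b = 1)
    (hna : n ⬝ᵥ a = 0) (hnb : n ⬝ᵥ b = 0) (hab : a ⬝ᵥ b = 0)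
    (f' g' p W₁ W₂ : ℝ)
    (B : Matrix (Fin 3) (Fin 3) ℝ)
    (hBdef : B = (1 + f' • vecMulVec a n + g' • vecMulVec b n) * Bbar *
      (1 + f' • vecMulVec n a + g' • vecMulVec n b))
    (T : Matrix (Fin 3) (Fin 3) ℝ)
    (hT : T = (-p) • (1 : Matrix (Fin 3) (Fin 3) ℝ) + (2 * W₁) • B - (2 * W₂) • B⁻¹) :
    a ⬝ᵥ T.mulVec n =
      2 * W₁ * ((n ⬝ᵥ Bbar.mulVec a) + f' * (n ⬝ᵥ Bbar.mulVec n))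
      - 2 * W₂ * ((n ⬝ᵥ Bbar⁻¹.mulVec a) - f' * (a ⬝ᵥ Bbar⁻¹.mulVec a)
          - g' * (a ⬝ᵥ Bbar⁻¹.mulVec b)) :=
  shear_stress_a_component_general Bbar hB n a b hnn haa hna hnb hab f' g' p W₁ W₂ B hBdef T hT
end

section
/- Let (n, a, b) be an orthonormal triad of vectors in ℝ³ and let f′, g′ be real numbers. Set B = (I + f′ a⊗n + g′ b⊗n)(I + f′ n⊗a + g′ n⊗b) (the left Cauchy–Green tensor with no pre-strain, B̄ = I). Then trace B = 3 + f′² + g′² and trace B⁻¹ = 3 + f′² + g′²; that is, in the absence of pre-strain the two principal invariants coincide: I₁ = I₂ = 3 + f′² + g′². -/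
open Matrix

lemma vmv_mul_vmv (u v w x : Fin 3 → ℝ) :
    vecMulVec u v * vecMulVec w x = (v ⬝ᵥ w) • vecMulVec u x := by
  ext i j
  simp only [vecMulVec_apply, Matrix.mul_apply, dotProduct, Finset.sum_mul, smul_eq_mul,
    Matrix.smul_apply]
  apply Finset.sum_congr rfl
  intros; ring

lemma trace_vmv (u v : Fin 3 → ℝ) : (vecMulVec u v).trace = u ⬝ᵥ v := by
  simp [Matrix.trace, vecMulVec_apply, dotProduct, Matrix.diag]

/-- In the absence of pre-strain (`B̄ = I`) the two principal invariants of the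
shear-wave motion coincide: `I₁ = I₂ = 3 + f′² + g′²`. -/
theorem invariants_no_prestrain
    (n a b : Fin 3 → ℝ)
    (hnn : n ⬝ᵥ n = 1) (haa : a ⬝ᵥ a = 1) (hbb : b ⬝ᵥ b = 1)
    (hna : n ⬝ᵥ a = 0) (hnb : n ⬝ᵥ b = 0) (hab : a ⬝ᵥ b = 0)
    (f' g' : ℝ)
    (B : Matrix (Fin 3) (Fin 3) ℝ)
    (hB : B = (1 + f' • vecMulVec a n + g' • vecMulVec b n) *
      (1 + f' • vecMulVec n a + g' • vecMulVec n b)) :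
    B.trace = 3 + f' ^ 2 + g' ^ 2 ∧ B⁻¹.trace = 3 + f' ^ 2 + g' ^ 2 := by
  have han : a ⬝ᵥ n = 0 := by rw [dotProduct_comm]; exact hna
  have hbn : b ⬝ᵥ n = 0 := by rw [dotProduct_comm]; exact hnb
  have hba : b ⬝ᵥ a = 0 := by rw [dotProduct_comm]; exact hab
  have hBinv : B⁻¹ = (1 - f' • vecMulVec n a - g' • vecMulVec n b) *
      (1 - f' • vecMulVec a n - g' • vecMulVec b n) := by
    apply Matrix.inv_eq_right_inv
    rw [hB]
    simp only [mul_add, add_mul, mul_sub, sub_mul, smul_mul_assoc, mul_smul_comm,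
      vmv_mul_vmv, one_mul, mul_one, smul_smul, hnn, haa, hbb, hna, hnb, hab, han, hbn, hba,
      mul_zero, zero_mul, zero_smul, smul_zero, smul_add, smul_sub, add_zero, zero_add, one_smul]
    module
  constructor
  · rw [hB]
    simp only [mul_add, add_mul, smul_mul_assoc, mul_smul_comm,
      vmv_mul_vmv, one_mul, mul_one, smul_smul, hnn, haa, hbb, hna, hnb, hab, han, hbn, hba]
    simp only [zero_smul, smul_zero, one_smul, Matrix.trace_add, Matrix.trace_smul,
      Matrix.trace_one, trace_vmv, hnn, haa, hbb, hna, hnb, hab, han, hbn, hba,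
      smul_eq_mul]
    simp [Fintype.card_fin]
    ring
  · rw [hBinv]
    simp only [mul_sub, sub_mul, smul_mul_assoc, mul_smul_comm,
      vmv_mul_vmv, one_mul, mul_one, smul_smul, hnn, haa, hbb, hna, hnb, hab, han, hbn, hba]
    simp only [zero_smul, smul_zero, one_smul, Matrix.trace_sub, Matrix.trace_add,
      Matrix.trace_smul, Matrix.trace_one, trace_vmv, hnn, haa, hbb, hna, hnb, hab, han, hbn,
      hba, smul_eq_mul]
    simp [Fintype.card_fin]
    ring
end
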